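/- Let (Γ,⊑) be an extended modular complex, let p ⊑ q, let A' be a convex set of vertices, let p' be a gate of p at A' and q' a gate of q at A'. Then p' ⊑ q'. -/

import Mathlib

namespace ZeroExt

variable {V : Type*}

/-- The metric interval `I(x,y)` in a graph. -/
def interval (G : SimpleGraph V) (x y : V) : Set V :=
  {z | G.dist x z + G.dist z y = G.dist x y}

/-- `m` is a median of `x, y, z`. -/
def IsMedian (G : SimpleGraph V) (x y z m : V) : Prop :=
  m ∈ interval G x y ∧ m ∈ interval G y z ∧ m ∈ interval G x z

/-- A graph is modular if every triple of vertices has a median. -/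
def Modular (G : SimpleGraph V) : Prop :=
  ∀ x y z : V, ∃ m : V, IsMedian G x y z m

/-- `(a,b,c)` is a shortest subpath. -/
def ShortestTriple (G : SimpleGraph V) (a b c : V) : Prop :=
  G.dist a b + G.dist b c = G.dist a c

/-- `(a,b,c,d)` is a shortest subpath. -/
def ShortestQuad (G : SimpleGraph V) (a b c d : V) : Prop :=
  G.dist a b + G.dist b c + G.dist c d = G.dist a d

/-- `(x1,x2,x3,x4)` is an isometric rectangle. -/
def IsoRect (G : SimpleGraph V) (x1 x2 x3 x4 : V) : Prop :=
  ShortestTriple G x4 x1 x2 ∧ ShortestTriple G x1 x2 x3 ∧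
    ShortestTriple G x2 x3 x4 ∧ ShortestTriple G x3 x4 x1

/-- A set of vertices is convex if it contains the interval of each pair of its points. -/
def Convex (G : SimpleGraph V) (U : Set V) : Prop :=
  ∀ x ∈ U, ∀ y ∈ U, interval G x y ⊆ U

/-- `g` is a gate of `q` at `U`. -/
def IsGate (G : SimpleGraph V) (U : Set V) (q g : V) : Prop :=
  g ∈ U ∧ ∀ u ∈ U, G.dist q u = G.dist q g + G.dist g u

/-- A 4-cycle in a graph. -/
def IsFourCycle (G : SimpleGraph V) (x1 x2 x3 x4 : V) : Prop :=
  G.Adj x1 x2 ∧ G.Adj x2 x3 ∧ G.Adj x3 x4 ∧ G.Adj x4 x1 ∧ x1 ≠ x3 ∧ x2 ≠ x4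

/-- A modular complex: a finite connected modular graph together with an
acyclic admissible edge orientation. -/
structure ModularComplex (V : Type*) [Fintype V] where
  G : SimpleGraph V
  connected : G.Connected
  modular : Modular G
  ori : V → V → Prop
  ori_adj : ∀ {x y : V}, ori x y → G.Adj x y
  ori_total : ∀ {x y : V}, G.Adj x y → ori x y ∨ ori y x
  acyclic : ∀ {x y : V}, Relation.ReflTransGen ori x y → Relation.ReflTransGen ori y x → x = y
  admissible : ∀ {x1 x2 x3 x4 : V}, IsFourCycle G x1 x2 x3 x4 → ori x1 x2 → ori x4 x3

variable [Fintype V]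

/-- The partial order `⪯` induced by the orientation. -/
def ModularComplex.le (Γ : ModularComplex V) : V → V → Prop :=
  Relation.ReflTransGen Γ.ori

/-- The order interval `[p,q]`. -/
def ModularComplex.Icc (Γ : ModularComplex V) (p q : V) : Set V :=
  {x | Γ.le p x ∧ Γ.le x q}

/-- `m` is the greatest lower bound `p ∧ q`. -/
def ModularComplex.IsMeet (Γ : ModularComplex V) (p q m : V) : Prop :=
  Γ.le m p ∧ Γ.le m q ∧ ∀ x : V, Γ.le x p → Γ.le x q → Γ.le x m

/-- `j` is the least upper bound `p ∨ q`. -/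
def ModularComplex.IsJoin (Γ : ModularComplex V) (p q j : V) : Prop :=
  Γ.le p j ∧ Γ.le q j ∧ ∀ x : V, Γ.le p x → Γ.le q x → Γ.le j x

/-- `(p,q)` is a Boolean pair. -/
def ModularComplex.BooleanPair (Γ : ModularComplex V) (p q : V) : Prop :=
  ∃ (k : ℕ) (φ : Finset (Fin k) → V), Function.Injective φ ∧
    φ ∅ = p ∧ φ Finset.univ = q ∧
    ∀ (S : Finset (Fin k)) (i : Fin k), i ∉ S → Γ.ori (φ S) (φ (insert i S))

/-- An extended modular complex: a modular complex with an admissible relation `⊑`. -/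
structure ExtendedModularComplex (V : Type*) [Fintype V] extends ModularComplex V where
  sq : V → V → Prop
  sq_le : ∀ {p q : V}, sq p q → toModularComplex.le p q
  sq_refl : ∀ p : V, sq p p
  sq_edge : ∀ {p q : V}, ori p q → sq p q
  sq_interval : ∀ {p q a b : V}, sq p q → toModularComplex.le a b →
    a ∈ toModularComplex.Icc p q → b ∈ toModularComplex.Icc p q → sq a b
  sq_join : ∀ {p q1 q2 j : V}, sq p q1 → sq p q2 → toModularComplex.IsJoin q1 q2 j → sq p j
  sq_meet : ∀ {p1 p2 q m : V}, sq p1 q → sq p2 q → toModularComplex.IsMeet p1 p2 m → sq m q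

/-- `L^+_p = {x : p ⊑ x}`. -/
def ExtendedModularComplex.Lpos (Γ : ExtendedModularComplex V) (p : V) : Set V :=
  {x | Γ.sq p x}

/-- `L^-_p = {x : x ⊑ p}`. -/
def ExtendedModularComplex.Lneg (Γ : ExtendedModularComplex V) (p : V) : Set V :=
  {x | Γ.sq x p}

/-- `p, q` are ◇-neighbors. -/
def ExtendedModularComplex.DiamondNb (Γ : ExtendedModularComplex V) (p q : V) : Prop :=
  ∃ a b : V, Γ.sq a b ∧ p ∈ Γ.Icc a b ∧ q ∈ Γ.Icc a b

/-- The thickening `Δ(Γ)`. -/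
def ExtendedModularComplex.thick (Γ : ExtendedModularComplex V) : SimpleGraph V where
  Adj p q := p ≠ q ∧ Γ.DiamondNb p q
  symm := by
    constructor
    rintro p q ⟨hne, a, b, hab, hp, hq⟩
    exact ⟨hne.symm, a, b, hab, hq, hp⟩
  loopless := by constructor; rintro p ⟨hne, -⟩; exact hne rfl


/-! Induction on `d(p,q) + d(p,p') + d(q,q')`. If a neighbour of `p` lies on geodesics from `p`
to both `q` and `p'`, it lies in `[p,q]`, hence is `⊑ q`, and replaces `p`; symmetrically for `q`.
Otherwise `d(p',q') = d(p,q)` and `d(p,p') = d(q,q')`. If the first edge `p → c` of a geodesic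
from `p` to `p'` points upwards, an oriented chain from `p` to `q` is translated along it, square
by square, towards `A'`; every new vertex is a join of two vertices `⊑`-above `p`, so the
translated pair is again related by `⊑`, and one step closer to `A'`. If the edge points into
`p`, an isometric rectangle forces the first edge of a geodesic from `q` to `q'` to point into
`q`, and the same translation is done in the reversed complex. -/

-- drops the variable `[Fintype V]` of the definitions above
end ZeroExt

namespace ZeroExt

open SimpleGraph

variable {V : Type*}

section Graph

variable {G : SimpleGraph V} {U : Set V}

theorem mem_interval {x y z : V} : z ∈ interval G x y ↔ G.dist x z + G.dist z y = G.dist x y :=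
  Iff.rfl

theorem mem_interval_comm {x y z : V} : z ∈ interval G x y ↔ z ∈ interval G y x := by
  rw [mem_interval, mem_interval, SimpleGraph.dist_comm (u := x), SimpleGraph.dist_comm (u := y),
    SimpleGraph.dist_comm (u := z), SimpleGraph.dist_comm (u := y) (v := x), add_comm]

theorem exists_adj_mem_interval (hc : G.Connected) {u v : V} (h : u ≠ v) :
    ∃ w, G.Adj u w ∧ w ∈ interval G u v := by
  obtain ⟨p, hp⟩ := hc.exists_walk_length_eq_dist u v
  cases p with
  | nil => exact absurd rfl h
  | @cons _ w _ hadj p =>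
    have := SimpleGraph.dist_le p
    have := hc.dist_triangle (u := u) (v := w) (w := v)
    rw [Walk.length_cons] at hp
    rw [dist_eq_one_iff_adj.mpr hadj] at this
    refine ⟨w, hadj, ?_⟩
    rw [mem_interval, dist_eq_one_iff_adj.mpr hadj]
    omega

theorem IsGate.of_mem_interval (hc : G.Connected) {x g y : V} (hg : IsGate G U x g)
    (hy : y ∈ interval G x g) : IsGate G U y g := by
  refine ⟨hg.1, fun u hu => ?_⟩
  have := hg.2 u hu
  have := hc.dist_triangle (u := y) (v := g) (w := u)
  have := hc.dist_triangle (u := x) (v := y) (w := u)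
  rw [mem_interval] at hy
  omega

theorem IsGate.dist_le (hc : G.Connected) {x y gx gy : V} (hx : IsGate G U x gx)
    (hy : IsGate G U y gy) : G.dist gx gy ≤ G.dist x y := by
  have := hx.2 gy hy.1
  have := hy.2 gx hx.1
  have := hc.dist_triangle (u := x) (v := y) (w := gy)
  have := hc.dist_triangle (u := y) (v := x) (w := gx)
  have := SimpleGraph.dist_comm (G := G) (u := x) (v := y)
  have := SimpleGraph.dist_comm (G := G) (u := gx) (v := gy)
  omega

theorem IsGate.adj_of_adj (hc : G.Connected) {x y gx gy : V} (hxy : G.Adj x y)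
    (hx : IsGate G U x gx) (hy : IsGate G U y gy) (hne : gx ≠ gy) :
    G.Adj gx gy ∧ G.dist x gx = G.dist y gy := by
  have hle := hx.dist_le hc hy
  have hpos := hc.pos_dist_of_ne hne
  rw [dist_eq_one_iff_adj.mpr hxy] at hle
  have h1 : G.dist gx gy = 1 := by omega
  refine ⟨dist_eq_one_iff_adj.mp h1, ?_⟩
  have := hx.2 gy hy.1
  have := hy.2 gx hx.1
  have := hc.dist_triangle (u := x) (v := y) (w := gy)
  have := hc.dist_triangle (u := y) (v := x) (w := gx)
  have := dist_eq_one_iff_adj.mpr hxy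
  have := dist_eq_one_iff_adj.mpr hxy.symm
  have := SimpleGraph.dist_comm (G := G) (u := gx) (v := gy)
  omega

end Graph

namespace Modular

variable {G : SimpleGraph V} {U : Set V}

theorem dist_eq_or_of_adj (hm : Modular G) (hc : G.Connected) {u v : V} (h : G.Adj u v) (w : V) :
    G.dist w v = G.dist w u + 1 ∨ G.dist w u = G.dist w v + 1 := by
  obtain ⟨m, h1, h2, h3⟩ := hm u v w
  simp only [mem_interval, dist_eq_one_iff_adj.mpr h] at h1 h2 h3
  have := SimpleGraph.dist_comm (G := G) (u := w) (v := u)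
  have := SimpleGraph.dist_comm (G := G) (u := w) (v := v)
  rcases (by omega : G.dist u m = 0 ∨ G.dist m v = 0) with hu | hv
  · obtain rfl := hc.dist_eq_zero_iff.mp hu
    rw [dist_eq_one_iff_adj.mpr h.symm] at h2
    omega
  · obtain rfl := hc.dist_eq_zero_iff.mp hv
    rw [dist_eq_one_iff_adj.mpr h] at h3
    omega

/-- The quadrangle condition. -/
theorem exists_adj_adj_of_dist_eq (hm : Modular G) (hc : G.Connected) {z u₁ u₂ w : V}
    (h₁ : G.Adj z u₁) (h₂ : G.Adj z u₂) (hne : u₁ ≠ u₂) (hd : G.dist w u₁ = G.dist w u₂)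
    (hz : G.dist w z = G.dist w u₁ + 1) :
    ∃ s, G.Adj u₁ s ∧ G.Adj u₂ s ∧ G.dist w s + 1 = G.dist w u₁ ∧ s ≠ z := by
  have hu₁₂ : G.dist u₁ u₂ = 2 := by
    have := hm.dist_eq_or_of_adj hc h₂ u₁
    have := hc.dist_triangle (u := u₁) (v := z) (w := u₂)
    have := hc.pos_dist_of_ne hne
    rw [dist_eq_one_iff_adj.mpr h₁.symm] at *
    rw [dist_eq_one_iff_adj.mpr h₂] at *
    omega
  obtain ⟨s, e₁, e₂, e₃⟩ := hm u₁ u₂ w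
  simp only [mem_interval, hu₁₂] at e₁ e₂ e₃
  have := SimpleGraph.dist_comm (G := G) (u := w) (v := u₁)
  have := SimpleGraph.dist_comm (G := G) (u := w) (v := u₂)
  have := SimpleGraph.dist_comm (G := G) (u := w) (v := s)
  have := SimpleGraph.dist_comm (G := G) (u := w) (v := z)
  have := SimpleGraph.dist_comm (G := G) (u := u₁) (v := u₂)
  have hs₁ : G.dist u₁ s ≠ 0 := by
    intro h0
    obtain rfl := hc.dist_eq_zero_iff.mp h0
    omega
  have hs₂ : G.dist s u₂ ≠ 0 := by
    intro h0
    obtain rfl := hc.dist_eq_zero_iff.mp h0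
    omega
  refine ⟨s, dist_eq_one_iff_adj.mp (by omega), (dist_eq_one_iff_adj.mp (by omega)).symm,
    by omega, ?_⟩
  rintro rfl
  omega

theorem exists_adj_mem_interval_inter (hm : Modular G) (hc : G.Connected) {x y z : V}
    (h : x ∉ interval G y z) : ∃ a, G.Adj x a ∧ a ∈ interval G x y ∧ a ∈ interval G x z := by
  obtain ⟨m, hmxy, hmyz, hmxz⟩ := hm x y z
  have hxm : x ≠ m := by
    rintro rfl
    exact h hmyz
  obtain ⟨a, hxa, ham⟩ := exists_adj_mem_interval hc hxm
  refine ⟨a, hxa, ?_, ?_⟩ <;> rw [mem_interval] at *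
  · have := hc.dist_triangle (u := a) (v := m) (w := y)
    have := hc.dist_triangle (u := x) (v := a) (w := y)
    omega
  · have := hc.dist_triangle (u := a) (v := m) (w := z)
    have := hc.dist_triangle (u := x) (v := a) (w := z)
    omega

/-- A nearest point is a gate. -/
theorem exists_isGate [Finite V] (hm : Modular G) (hc : G.Connected) (hU : Convex G U)
    (hne : U.Nonempty) (x : V) : ∃ g, IsGate G U x g := by
  obtain ⟨g, hg, hmin⟩ := U.exists_min_image (G.dist x) U.toFinite hne
  refine ⟨g, hg, fun u hu => ?_⟩
  obtain ⟨m, hmxg, hmgu, hmxu⟩ := hm x g u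
  have hmU : m ∈ U := hU g hg u hu hmgu
  have := hmin m hmU
  rw [mem_interval] at hmxg hmgu hmxu
  obtain rfl : m = g := hc.dist_eq_zero_iff.mp (by omega)
  omega

end Modular

variable [Fintype V]

namespace ModularComplex

def dual (Γ : ModularComplex V) : ModularComplex V where
  G := Γ.G
  connected := Γ.connected
  modular := Γ.modular
  ori x y := Γ.ori y x
  ori_adj h := (Γ.ori_adj h).symm
  ori_total h := Γ.ori_total h.symm
  acyclic h₁ h₂ :=
    Γ.acyclic (Relation.reflTransGen_swap.mp h₂) (Relation.reflTransGen_swap.mp h₁)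
  admissible := fun ⟨a₁, a₂, a₃, a₄, n₁, n₂⟩ h =>
    Γ.admissible ⟨a₁.symm, a₄.symm, a₃.symm, a₂.symm, n₂, n₁⟩ h

variable {Γ : ModularComplex V}

theorem dual_le {x y : V} : Γ.dual.le x y ↔ Γ.le y x := Relation.reflTransGen_swap

theorem ori_asymm {x y : V} (h : Γ.ori x y) : ¬ Γ.ori y x := fun h' =>
  (Γ.ori_adj h).ne (Γ.acyclic (.single h) (.single h'))

/-- Opposite sides of an isometric rectangle carry parallel orientations. -/
theorem ori_of_rectangle (L : ℕ) {a b c d : V} (hab : Γ.G.Adj a b) (hdc : Γ.G.Adj d c)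
    (hbc : Γ.G.dist b c = L) (had : Γ.G.dist a d = L) (hac : Γ.G.dist a c = L + 1)
    (hbd : Γ.G.dist b d = L + 1) (h : Γ.ori a b) : Γ.ori d c := by
  induction L generalizing d c with
  | zero =>
    obtain rfl := Γ.connected.dist_eq_zero_iff.mp had
    obtain rfl := Γ.connected.dist_eq_zero_iff.mp hbc
    exact h
  | succ L ih =>
    -- shrink the rectangle by moving the side `dc` one step towards `a`
    obtain ⟨y, hdy, hy⟩ := exists_adj_mem_interval Γ.connected
      (u := d) (v := a) (by rintro rfl; simp at had)
    rw [mem_interval, SimpleGraph.dist_comm (u := d) (v := a), had,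
      dist_eq_one_iff_adj.mpr hdy] at hy
    have := SimpleGraph.dist_comm (G := Γ.G) (u := a) (v := y)
    have := SimpleGraph.dist_comm (G := Γ.G) (u := a) (v := c)
    have := dist_eq_one_iff_adj.mpr hab.symm
    have := dist_eq_one_iff_adj.mpr hdy.symm
    have hby : Γ.G.dist b y = L + 1 := by
      have := Γ.connected.dist_triangle (u := b) (v := a) (w := y)
      have := Γ.connected.dist_triangle (u := b) (v := y) (w := d)
      omega
    have hcy : c ≠ y := by
      rintro rfl
      omega
    obtain ⟨w, hcw, hyw, hbw, hwd⟩ := Γ.modular.exists_adj_adj_of_dist_eq Γ.connected (w := b)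
      hdc hdy hcy (by omega) (by omega)
    have haw : Γ.G.dist a w = L + 1 := by
      have := Γ.connected.dist_triangle (u := a) (v := y) (w := w)
      have := Γ.connected.dist_triangle (u := a) (v := w) (w := c)
      have := dist_eq_one_iff_adj.mpr hyw
      have := dist_eq_one_iff_adj.mpr hcw.symm
      omega
    have hyw_ori : Γ.ori y w := ih hyw (by omega) (by omega) haw hby
    exact Γ.admissible ⟨hyw, hcw.symm, hdc.symm, hdy, hcy.symm, hwd⟩ hyw_ori

theorem dist_eq_add_one_of_ori_of_le {u x y : V} (hux : Γ.ori u x) (hxy : Γ.le x y) :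
    Γ.G.dist u y = Γ.G.dist x y + 1 := by
  induction hxy using Relation.ReflTransGen.head_induction_on generalizing u with
  | refl => simpa using dist_eq_one_iff_adj.mpr (Γ.ori_adj hux)
  | head hxx₁ hx₁y ih =>
    rename_i x x₁
    have hx := ih hxx₁
    have := SimpleGraph.dist_comm (G := Γ.G) (u := u) (v := y)
    have := SimpleGraph.dist_comm (G := Γ.G) (u := x) (v := y)
    have := SimpleGraph.dist_comm (G := Γ.G) (u := x₁) (v := y)
    rcases Γ.modular.dist_eq_or_of_adj Γ.connected (Γ.ori_adj hux) y with hfar | hnear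
    · -- the quadrangle condition at `x` yields an edge `s → x₁` pointing away from `y`
      have hux₁ : u ≠ x₁ := by
        rintro rfl
        exact Γ.ori_asymm hux hxx₁
      obtain ⟨s, hus, hx₁s, hs, hsx⟩ := Γ.modular.exists_adj_adj_of_dist_eq Γ.connected
        (Γ.ori_adj hux).symm (Γ.ori_adj hxx₁) hux₁ (by omega) hfar
      have hsx₁ : Γ.ori s x₁ := Γ.admissible
        ⟨Γ.ori_adj hux, Γ.ori_adj hxx₁, hx₁s, hus.symm, hux₁, hsx.symm⟩ hux
      have := ih hsx₁
      have := SimpleGraph.dist_comm (G := Γ.G) (u := s) (v := y)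
      omega
    · omega

theorem le_of_mem_interval {p q z : V} (hpq : Γ.le p q) (hz : z ∈ interval Γ.G p q) :
    Γ.le z q := by
  induction hpq using Relation.ReflTransGen.head_induction_on generalizing z with
  | refl =>
    rw [mem_interval, SimpleGraph.dist_self] at hz
    obtain rfl := Γ.connected.dist_eq_zero_iff.mp (Nat.add_eq_zero_iff.mp hz).1
    exact .refl
  | head hpx₁ hx₁q ih =>
    rename_i p x₁
    rw [mem_interval] at hz
    have hp := dist_eq_add_one_of_ori_of_le hpx₁ hx₁q
    have := SimpleGraph.dist_comm (G := Γ.G) (u := p) (v := z)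
    have := SimpleGraph.dist_comm (G := Γ.G) (u := x₁) (v := z)
    have := Γ.connected.dist_triangle (u := x₁) (v := z) (w := q)
    rcases Γ.modular.dist_eq_or_of_adj Γ.connected (Γ.ori_adj hpx₁) z with hfar | hnear
    · -- the median `m` of `x₁, z, q` is a neighbour of `z`, and the rectangle `p x₁ m z`
      -- orients the edge `zm` upwards
      obtain ⟨m, hm₁, hm₂, hm₃⟩ := Γ.modular x₁ z q
      rw [mem_interval] at hm₁ hm₂ hm₃
      have := SimpleGraph.dist_comm (G := Γ.G) (u := z) (v := m)
      have hzm : Γ.G.dist z m = 1 := by omega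
      have hzm_adj := dist_eq_one_iff_adj.mp hzm
      have hpm : Γ.G.dist p m = Γ.G.dist p z + 1 := by
        have := Γ.connected.dist_triangle (u := p) (v := m) (w := q)
        rcases Γ.modular.dist_eq_or_of_adj Γ.connected hzm_adj p with h | h <;> omega
      have hori : Γ.ori z m := Γ.ori_of_rectangle (Γ.G.dist p z) (Γ.ori_adj hpx₁) hzm_adj
        (by omega) rfl hpm (by omega) hpx₁
      exact .head hori (ih (by rw [mem_interval]; omega))
    · exact ih (by rw [mem_interval]; omega)

theorem interval_subset_Icc {p q : V} (hpq : Γ.le p q) : interval Γ.G p q ⊆ Γ.Icc p q :=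
  fun _ hz => ⟨dual_le.mp (le_of_mem_interval (Γ := Γ.dual) (dual_le.mpr hpq)
    (mem_interval_comm.mp hz)), le_of_mem_interval hpq hz⟩

theorem isJoin_of_ori_of_ori {g₁ g₂ w : V} (hne : g₁ ≠ g₂) (h₁ : Γ.ori g₁ w)
    (h₂ : Γ.ori g₂ w) : Γ.IsJoin g₁ g₂ w := by
  refine ⟨.single h₁, .single h₂, fun x hx₁ hx₂ => ?_⟩
  have := SimpleGraph.dist_comm (G := Γ.G) (u := x) (v := g₁)
  have := SimpleGraph.dist_comm (G := Γ.G) (u := x) (v := g₂)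
  have := SimpleGraph.dist_comm (G := Γ.G) (u := x) (v := w)
  have := dist_eq_one_iff_adj.mpr (Γ.ori_adj h₁)
  have := dist_eq_one_iff_adj.mpr (Γ.ori_adj h₂)
  rcases Γ.modular.dist_eq_or_of_adj Γ.connected (Γ.ori_adj h₁) x with hw₁ | hg₁
  · rcases Γ.modular.dist_eq_or_of_adj Γ.connected (Γ.ori_adj h₂) x with hw₂ | hg₂
    · -- otherwise the quadrangle condition gives an edge `s → g₂` pointing away from `x`
      exfalso
      obtain ⟨s, hs₁, hs₂, hs, hsw⟩ := Γ.modular.exists_adj_adj_of_dist_eq Γ.connected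
        (Γ.ori_adj h₁).symm (Γ.ori_adj h₂).symm hne (by omega) hw₁
      have hsg₂ : Γ.ori s g₂ :=
        Γ.admissible ⟨Γ.ori_adj h₁, (Γ.ori_adj h₂).symm, hs₂, hs₁.symm, hne, hsw.symm⟩ h₁
      have := dist_eq_add_one_of_ori_of_le hsg₂ hx₂
      have := SimpleGraph.dist_comm (G := Γ.G) (u := x) (v := s)
      omega
    · exact le_of_mem_interval hx₂ (by rw [mem_interval]; omega)
  · exact le_of_mem_interval hx₁ (by rw [mem_interval]; omega)

theorem isMeet_of_dual_isJoin {a b j : V} (h : Γ.dual.IsJoin a b j) : Γ.IsMeet a b j :=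
  ⟨dual_le.mp h.1, dual_le.mp h.2.1,
    fun x hxa hxb => dual_le.mp (h.2.2 x (dual_le.mpr hxa) (dual_le.mpr hxb))⟩

theorem isJoin_of_dual_isMeet {a b j : V} (h : Γ.dual.IsMeet a b j) : Γ.IsJoin a b j :=
  ⟨dual_le.mp h.1, dual_le.mp h.2.1,
    fun x hxa hxb => dual_le.mp (h.2.2 x (dual_le.mpr hxa) (dual_le.mpr hxb))⟩

theorem exists_square {U : Set V} {x x₂ y y₂ m : V} (hy : IsGate Γ.G U x y)
    (hy₂ : IsGate Γ.G U x₂ y₂) (hyy₂ : Γ.G.Adj y y₂) (hd : Γ.G.dist x y = Γ.G.dist x₂ y₂)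
    (hxx₂ : Γ.ori x x₂) (hxm : Γ.ori x m) (hm : m ∈ interval Γ.G x y) :
    ∃ M, Γ.ori m M ∧ Γ.ori x₂ M ∧ Γ.IsJoin x₂ m M ∧ M ∈ interval Γ.G x₂ y₂ := by
  have hmy₂ := (hy.of_mem_interval Γ.connected hm).2 y₂ hy₂.1
  have hx₂y := hy₂.2 y hy.1
  have hxy₂ := hy.2 y₂ hy₂.1
  rw [mem_interval] at hm
  have := dist_eq_one_iff_adj.mpr (Γ.ori_adj hxm)
  have := dist_eq_one_iff_adj.mpr hyy₂
  have := SimpleGraph.dist_comm (G := Γ.G) (u := y) (v := y₂)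
  have := SimpleGraph.dist_comm (G := Γ.G) (u := x) (v := m)
  have hmx₂ : Γ.G.dist m x₂ = 2 := by
    rcases Γ.modular.dist_eq_or_of_adj Γ.connected (Γ.ori_adj hxx₂) m with h | h
    · omega
    · obtain rfl : m = x₂ := Γ.connected.dist_eq_zero_iff.mp (by omega)
      omega
  -- the fourth vertex of the square is the median of `m, x₂, y₂`
  obtain ⟨M, e₁, e₂, e₃⟩ := Γ.modular m x₂ y₂
  rw [mem_interval] at e₁ e₂ e₃
  have := SimpleGraph.dist_comm (G := Γ.G) (u := x₂) (v := M)
  have hmM := dist_eq_one_iff_adj.mp (by omega : Γ.G.dist m M = 1)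
  have hMx₂ := dist_eq_one_iff_adj.mp (by omega : Γ.G.dist M x₂ = 1)
  have hxM : x ≠ M := by
    rintro rfl
    omega
  have hmx₂ : m ≠ x₂ := by
    rintro rfl
    simp at hmx₂
  have hmM_ori : Γ.ori m M :=
    Γ.admissible ⟨Γ.ori_adj hxx₂, hMx₂.symm, hmM.symm, (Γ.ori_adj hxm).symm, hxM, hmx₂.symm⟩ hxx₂
  have hx₂M_ori : Γ.ori x₂ M :=
    Γ.admissible ⟨Γ.ori_adj hxm, hmM, hMx₂, (Γ.ori_adj hxx₂).symm, hxM, hmx₂⟩ hxm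
  exact ⟨M, hmM_ori, hx₂M_ori, isJoin_of_ori_of_ori hmx₂.symm hx₂M_ori hmM_ori, e₂⟩

theorem exists_parallel_ori {U : Set V} {p q p' q' c : V} (hpq : Γ.le p q)
    (hp' : IsGate Γ.G U p p') (hq' : IsGate Γ.G U q q')
    (ht : Γ.G.dist p' q' = Γ.G.dist p q) (hr : Γ.G.dist p p' = Γ.G.dist q q')
    (hcp : Γ.ori c p) (hc : c ∈ interval Γ.G p p') :
    ∃ e, Γ.ori e q ∧ e ∈ interval Γ.G q q' := by
  have hcq' := (hp'.of_mem_interval Γ.connected hc).2 q' hq'.1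
  have hpq' := hp'.2 q' hq'.1
  rw [mem_interval] at hc
  have := dist_eq_one_iff_adj.mpr (Γ.ori_adj hcp).symm
  have := SimpleGraph.dist_comm (G := Γ.G) (u := q) (v := c)
  have := SimpleGraph.dist_comm (G := Γ.G) (u := q) (v := p)
  have hcq : Γ.G.dist c q = Γ.G.dist p q + 1 := by
    rcases Γ.modular.dist_eq_or_of_adj Γ.connected (Γ.ori_adj hcp) q with h | h
    · -- `c` would lie in `[p, q]`, against `c → p`
      have hpc := (interval_subset_Icc hpq (by rw [mem_interval]; omega : c ∈ _)).1
      exact absurd (Γ.acyclic (.single hcp) hpc) (Γ.ori_adj hcp).ne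
    · omega
  -- `e` is the median of `c, q, q'`, and `c p q e` is an isometric rectangle
  obtain ⟨e, f₁, f₂, f₃⟩ := Γ.modular c q q'
  rw [mem_interval] at f₁ f₂ f₃
  have := SimpleGraph.dist_comm (G := Γ.G) (u := q) (v := e)
  have hqe := dist_eq_one_iff_adj.mp (by omega : Γ.G.dist e q = 1)
  have hpe : Γ.G.dist p e = Γ.G.dist p q + 1 := by
    have := Γ.connected.dist_triangle (u := p) (v := q) (w := e)
    have := Γ.connected.dist_triangle (u := p) (v := e) (w := q')
    omega
  exact ⟨e, Γ.ori_of_rectangle (Γ.G.dist p q) (Γ.ori_adj hcp) hqe rfl (by omega) hcq hpe hcp,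
    by rw [mem_interval]; exact f₂⟩

end ModularComplex

namespace ExtendedModularComplex

def dual (Γ : ExtendedModularComplex V) : ExtendedModularComplex V where
  toModularComplex := Γ.toModularComplex.dual
  sq p q := Γ.sq q p
  sq_le h := ModularComplex.dual_le.mpr (Γ.sq_le h)
  sq_refl p := Γ.sq_refl p
  sq_edge h := Γ.sq_edge h
  sq_interval hpq hab ha hb := Γ.sq_interval hpq (ModularComplex.dual_le.mp hab)
    ⟨ModularComplex.dual_le.mp hb.2, ModularComplex.dual_le.mp hb.1⟩
    ⟨ModularComplex.dual_le.mp ha.2, ModularComplex.dual_le.mp ha.1⟩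
  sq_join h₁ h₂ hj := Γ.sq_meet h₁ h₂ (ModularComplex.isMeet_of_dual_isJoin hj)
  sq_meet h₁ h₂ hm := Γ.sq_join h₁ h₂ (ModularComplex.isJoin_of_dual_isMeet hm)

variable {Γ : ExtendedModularComplex V} {U : Set V}

theorem sq_of_le_of_le {p q a b : V} (h : Γ.sq p q) (hpa : Γ.le p a) (hab : Γ.le a b)
    (hbq : Γ.le b q) : Γ.sq a b :=
  Γ.sq_interval h hab ⟨hpa, hab.trans hbq⟩ ⟨hpa.trans hab, hbq⟩

/-- Translates the chain from `x` to `q` along `x → m`, square by square (`exists_square`). -/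
theorem exists_sq_ladder (hU : Convex Γ.G U) {p q q' x m y : V} (hsq : Γ.sq p q)
    (hq' : IsGate Γ.G U q q') (hxq : Γ.le x q) (hpx : Γ.le p x) (hy : IsGate Γ.G U x y)
    (hyq' : Γ.G.dist y q' = Γ.G.dist x q) (hxm : Γ.ori x m) (hm : m ∈ interval Γ.G x y)
    (hpm : Γ.sq p m) :
    ∃ q₁, Γ.sq p q₁ ∧ Γ.le m q₁ ∧ Γ.G.dist m q₁ ≤ Γ.G.dist x q ∧ IsGate Γ.G U q₁ q' ∧
      Γ.G.dist q₁ q' + 1 = Γ.G.dist x y := by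
  induction hxq using Relation.ReflTransGen.head_induction_on generalizing m y with
  | refl =>
    rw [SimpleGraph.dist_self] at hyq'
    obtain rfl := Γ.connected.dist_eq_zero_iff.mp hyq'
    have := dist_eq_one_iff_adj.mpr (Γ.ori_adj hxm)
    refine ⟨m, hpm, .refl, by simp, hy.of_mem_interval Γ.connected hm, ?_⟩
    rw [mem_interval] at hm
    omega
  | head hxx₂ hx₂q ih =>
    rename_i x x₂
    obtain ⟨y₂, hy₂⟩ := Γ.modular.exists_isGate Γ.connected hU ⟨q', hq'.1⟩ x₂
    have hx := Γ.dist_eq_add_one_of_ori_of_le hxx₂ hx₂q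
    have hyy₂ := hy.dist_le Γ.connected hy₂
    have hy₂q' := hy₂.dist_le Γ.connected hq'
    have := Γ.connected.dist_triangle (u := y) (v := y₂) (w := q')
    rw [dist_eq_one_iff_adj.mpr (Γ.ori_adj hxx₂)] at hyy₂
    obtain ⟨hyy₂, hd⟩ := hy.adj_of_adj Γ.connected (Γ.ori_adj hxx₂) hy₂ (by rintro rfl; omega)
    obtain ⟨M, hmM, hx₂M, hjoin, hM⟩ := Γ.exists_square hy hy₂ hyy₂ hd hxx₂ hxm hm
    have hpM : Γ.sq p M := Γ.sq_join (sq_of_le_of_le hsq .refl (hpx.tail hxx₂) hx₂q) hpm hjoin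
    obtain ⟨q₁, hpq₁, hMq₁, hdist, hq₁, hq₁q'⟩ :=
      ih (hpx.tail hxx₂) hy₂ (by omega) hx₂M hM hpM
    have := Γ.connected.dist_triangle (u := m) (v := M) (w := q₁)
    have := dist_eq_one_iff_adj.mpr (Γ.ori_adj hmM)
    exact ⟨q₁, hpq₁, .head hmM hMq₁, by omega, hq₁, by omega⟩

theorem exists_sq_translate (hU : Convex Γ.G U) {p q p' q' c : V} (hsq : Γ.sq p q)
    (hp' : IsGate Γ.G U p p') (hq' : IsGate Γ.G U q q') (ht : Γ.G.dist p' q' = Γ.G.dist p q)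
    (hpc : Γ.ori p c) (hc : c ∈ interval Γ.G p p') :
    ∃ q₁, Γ.sq c q₁ ∧ IsGate Γ.G U q₁ q' ∧ Γ.G.dist c q₁ ≤ Γ.G.dist p q ∧
      Γ.G.dist q₁ q' + 1 = Γ.G.dist p p' := by
  obtain ⟨q₁, hpq₁, hcq₁, hd, hq₁, hq₁q'⟩ :=
    exists_sq_ladder hU hsq hq' (Γ.sq_le hsq) .refl hp' ht hpc hc (Γ.sq_edge hpc)
  exact ⟨q₁, sq_of_le_of_le hpq₁ (.single hpc) hcq₁ .refl, hq₁, hd, hq₁q'⟩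

theorem exists_smaller_of_dist_eq (hU : Convex Γ.G U) {p q p' q' : V} (hsq : Γ.sq p q)
    (hp' : IsGate Γ.G U p p') (hq' : IsGate Γ.G U q q') (ht : Γ.G.dist p' q' = Γ.G.dist p q)
    (hr : Γ.G.dist p p' = Γ.G.dist q q') (hne : p ≠ p') :
    ∃ p₁ q₁, Γ.sq p₁ q₁ ∧ IsGate Γ.G U p₁ p' ∧ IsGate Γ.G U q₁ q' ∧
      Γ.G.dist p₁ q₁ + Γ.G.dist p₁ p' + Γ.G.dist q₁ q' <
        Γ.G.dist p q + Γ.G.dist p p' + Γ.G.dist q q' := by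
  obtain ⟨c, hpc, hc⟩ := exists_adj_mem_interval Γ.connected hne
  have hcp' := hc
  rw [mem_interval, dist_eq_one_iff_adj.mpr hpc] at hcp'
  rcases Γ.ori_total hpc with hpc | hcp
  · obtain ⟨q₁, hcq₁, hq₁, hd, hq₁q'⟩ := exists_sq_translate hU hsq hp' hq' ht hpc hc
    exact ⟨c, q₁, hcq₁, hp'.of_mem_interval Γ.connected hc, hq₁, by omega⟩
  · -- the same move at `q`, in the dual complex
    obtain ⟨e, heq, he⟩ := Γ.exists_parallel_ori (Γ.sq_le hsq) hp' hq' ht hr hcp hc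
    have heq' := he
    rw [mem_interval, dist_eq_one_iff_adj.mpr (Γ.ori_adj heq).symm] at heq'
    obtain ⟨p₁, hep₁, hp₁, hd, hp₁p'⟩ := exists_sq_translate (Γ := Γ.dual) hU hsq hq' hp'
      (show Γ.G.dist q' p' = Γ.G.dist q p by rw [SimpleGraph.dist_comm, ht, SimpleGraph.dist_comm])
      heq he
    have hd : Γ.G.dist e p₁ ≤ Γ.G.dist q p := hd
    have hp₁p' : Γ.G.dist p₁ p' + 1 = Γ.G.dist q q' := hp₁p'
    have := SimpleGraph.dist_comm (G := Γ.G) (u := e) (v := p₁)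
    have := SimpleGraph.dist_comm (G := Γ.G) (u := q) (v := p)
    exact ⟨p₁, e, hep₁, hp₁, hq'.of_mem_interval Γ.connected he, by omega⟩

theorem exists_smaller (hU : Convex Γ.G U) {p q p' q' : V} (hsq : Γ.sq p q)
    (hp' : IsGate Γ.G U p p') (hq' : IsGate Γ.G U q q') (hne : ¬(p = p' ∧ q = q')) :
    ∃ p₁ q₁, Γ.sq p₁ q₁ ∧ IsGate Γ.G U p₁ p' ∧ IsGate Γ.G U q₁ q' ∧
      Γ.G.dist p₁ q₁ + Γ.G.dist p₁ p' + Γ.G.dist q₁ q' <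
        Γ.G.dist p q + Γ.G.dist p p' + Γ.G.dist q q' := by
  have hpq' := hp'.2 q' hq'.1
  have hqp' := hq'.2 p' hp'.1
  have := SimpleGraph.dist_comm (G := Γ.G) (u := p) (v := q)
  have := SimpleGraph.dist_comm (G := Γ.G) (u := p') (v := q')
  by_cases hp : p ∈ interval Γ.G q p'
  · by_cases hq : q ∈ interval Γ.G p q'
    · rw [mem_interval] at hp hq
      have hr : Γ.G.dist p p' = Γ.G.dist q q' := by omega
      refine exists_smaller_of_dist_eq hU hsq hp' hq' (by omega) hr ?_
      rintro rfl
      rw [SimpleGraph.dist_self] at hr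
      exact hne ⟨rfl, Γ.connected.dist_eq_zero_iff.mp hr.symm⟩
    · obtain ⟨b, hqb, hb, hbq'⟩ := Γ.modular.exists_adj_mem_interval_inter Γ.connected hq
      have hpb := Γ.interval_subset_Icc (Γ.sq_le hsq) (mem_interval_comm.mp hb)
      refine ⟨p, b, sq_of_le_of_le hsq .refl hpb.1 hpb.2, hp',
        hq'.of_mem_interval Γ.connected hbq', ?_⟩
      rw [mem_interval, dist_eq_one_iff_adj.mpr hqb] at hb hbq'
      have := SimpleGraph.dist_comm (G := Γ.G) (u := p) (v := b)
      omega
  · obtain ⟨a, hpa, ha, hap'⟩ := Γ.modular.exists_adj_mem_interval_inter Γ.connected hp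
    have hpa' := Γ.interval_subset_Icc (Γ.sq_le hsq) ha
    refine ⟨a, q, sq_of_le_of_le hsq hpa'.1 hpa'.2 .refl, hp'.of_mem_interval Γ.connected hap',
      hq', ?_⟩
    rw [mem_interval, dist_eq_one_iff_adj.mpr hpa] at ha hap'
    omega

end ExtendedModularComplex

/-- Projection onto a convex set preserves the relation `⊑`. -/
theorem sq_of_gates (Γ : ExtendedModularComplex V) (p q p' q' : V) (A' : Set V)
    (hpq : Γ.sq p q) (hconv : Convex Γ.G A')
    (hp' : IsGate Γ.G A' p p') (hq' : IsGate Γ.G A' q q') : Γ.sq p' q' := by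
  by_cases h : p = p' ∧ q = q'
  · obtain ⟨rfl, rfl⟩ := h
    exact hpq
  obtain ⟨p₁, q₁, hpq₁, hp₁, hq₁, _⟩ := Γ.exists_smaller hconv hpq hp' hq' h
  exact sq_of_gates Γ p₁ q₁ p' q' A' hpq₁ hconv hp₁ hq₁
termination_by Γ.G.dist p q + Γ.G.dist p p' + Γ.G.dist q q'

end ZeroExt
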